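/- Let f ∈ C^∞(ℝ²) satisfy (Λ^{k+l}/(k! l!)) ‖∂_x^k ∂_v^l f‖_∞ ≤ C for all k,l ∈ ℕ₀, where Λ > 0 and C > 0. Then for every λ with 0 < λ < Λ and every n ∈ ℕ₀, |f|_{λ,n} ≤ C Λ² (n+1)! / (Λ − λ)^{n+2}. -/

import Mathlib

open scoped BigOperators Nat
open MeasureTheory Filter

noncomputable section

/-- Supremum norm over `ℝ²` of a function of two real variables. -/
def sup2 (f : ℝ → ℝ → ℝ) : ℝ := ⨆ x : ℝ, ⨆ v : ℝ, |f x v|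

/-- Supremum norm over `ℝ`. -/
def sup1 (f : ℝ → ℝ) : ℝ := ⨆ x : ℝ, |f x|

/-- Mixed partial derivative `∂ₓᵏ ∂ᵥˡ f`. -/
def D2 (k l : ℕ) (f : ℝ → ℝ → ℝ) : ℝ → ℝ → ℝ :=
  fun x v => iteratedDeriv k (fun y => iteratedDeriv l (f y) v) x

/-- The coefficient `((k+l)!/(k+l-n)!) · λ^{k+l-n}/(k! l!)` for `k+l ≥ n`, else `0`. -/
def acoeff (lam : ℝ) (n k l : ℕ) : ℝ :=
  if n ≤ k + l then
    ((k + l).factorial : ℝ) / ((k + l - n).factorial : ℝ) * lam ^ (k + l - n)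
      / ((k.factorial : ℝ) * (l.factorial : ℝ))
  else 0

/-- `|f|_{λ,n}` for functions of two variables. -/
def pn2 (lam : ℝ) (n : ℕ) (f : ℝ → ℝ → ℝ) : ℝ :=
  ∑' p : ℕ × ℕ, acoeff lam n p.1 p.2 * sup2 (D2 p.1 p.2 f)

/-- `|ρ|_{λ,n}` for functions of one variable. -/
def pn1 (lam : ℝ) (n : ℕ) (ρ : ℝ → ℝ) : ℝ :=
  ∑' k : ℕ, acoeff lam n k 0 * sup1 (iteratedDeriv k ρ)

/-- `‖f‖_{H,λ}`. -/
def Hnorm2 (lam : ℝ) (f : ℝ → ℝ → ℝ) : ℝ :=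
  ∑' n : ℕ, (1 / ((n.factorial : ℝ)) ^ 2) * pn2 lam n f

/-- `|f|_{H,λ}`. -/
def Hsemi2 (lam : ℝ) (f : ℝ → ℝ → ℝ) : ℝ :=
  ∑' n : ℕ, ((n : ℝ) ^ 2 / ((n.factorial : ℝ)) ^ 2) * pn2 lam n f

/-- `‖ρ‖_{H,λ}` (one variable). -/
def Hnorm1 (lam : ℝ) (ρ : ℝ → ℝ) : ℝ :=
  ∑' n : ℕ, (1 / ((n.factorial : ℝ)) ^ 2) * pn1 lam n ρ

/-- `|ρ|_{H,λ}` (one variable). -/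
def Hsemi1 (lam : ℝ) (ρ : ℝ → ℝ) : ℝ :=
  ∑' n : ℕ, ((n : ℝ) ^ 2 / ((n.factorial : ℝ)) ^ 2) * pn1 lam n ρ

/-- Analyticity with radius of convergence `Λ` for functions on `ℝ²`. -/
def AnalyticRad2 (Λ : ℝ) (f : ℝ → ℝ → ℝ) : Prop :=
  ContDiff ℝ (⊤ : ℕ∞) (fun p : ℝ × ℝ => f p.1 p.2) ∧
    ∃ C > 0, ∀ k l : ℕ,
      Λ ^ (k + l) / ((k.factorial : ℝ) * (l.factorial : ℝ)) * sup2 (D2 k l f) ≤ C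

/-- Analyticity with radius of convergence `Λ` for functions on `ℝ`. -/
def AnalyticRad1 (Λ : ℝ) (ρ : ℝ → ℝ) : Prop :=
  ContDiff ℝ (⊤ : ℕ∞) ρ ∧
    ∃ C > 0, ∀ k : ℕ, Λ ^ k / (k.factorial : ℝ) * sup1 (iteratedDeriv k ρ) ≤ C

/-- `α(v) = -2v/(1+v²)`. -/
def alphaFn : ℝ → ℝ := fun v => -2 * v / (1 + v ^ 2)

/-!
Since `‖∂ₓᵏ∂ᵥˡ f‖_∞ ≤ C k! l! / Λ^{k+l}` and `(k+l)!/(k+l-n)! = n! (k+l choose n) (k+l-n)!`, the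
seminorm is dominated by `C n! ∑_{k,l} (k+l choose n) λ^{k+l-n} / Λ^{k+l}`. By Vandermonde's
identity this double series is `∑_{i ≤ n}` of products of the one-variable series
`∑_k (k choose i) λ^{k-i} / Λ^k = Λ / (Λ - λ)^{i+1}`, so it equals `(n+1) Λ² / (Λ - λ)^{n+2}`.
-/

open Finset

lemma hasSum_choose_mul_pow_div_pow {lam L : ℝ} (hlam : |lam| < L) (i : ℕ) :
    HasSum (fun k : ℕ => (k.choose i : ℝ) * lam ^ (k - i) / L ^ k)
      (L / (L - lam) ^ (i + 1)) := by
  have hL : 0 < L := (abs_nonneg lam).trans_lt hlam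
  have hd : L - lam ≠ 0 := by linarith [le_abs_self lam]
  have hr : ‖lam / L‖ < 1 := by
    rw [Real.norm_eq_abs, abs_div, abs_of_pos hL]
    exact (div_lt_one hL).2 hlam
  have H := (hasSum_choose_mul_geometric_of_norm_lt_one i hr).div_const (L ^ i)
  refine (hasSum_nat_add_iff' i).1 ?_
  have hlow : ∑ k ∈ range i, (k.choose i : ℝ) * lam ^ (k - i) / L ^ k = 0 :=
    sum_eq_zero fun k hk => by simp [Nat.choose_eq_zero_of_lt (mem_range.1 hk)]
  convert H using 1
  · rfl
  · funext k
    simp only [Nat.add_sub_cancel, div_pow, pow_add]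
    field_simp
  · rw [hlow, sub_zero, show 1 - lam / L = (L - lam) / L by field_simp, div_pow]
    field_simp
    ring

lemma add_choose_mul_pow_eq_sum (lam : ℝ) (n k l : ℕ) :
    ((k + l).choose n : ℝ) * lam ^ (k + l - n) =
      ∑ i ∈ range (n + 1),
        ((k.choose i : ℝ) * lam ^ (k - i)) * ((l.choose (n - i) : ℝ) * lam ^ (l - (n - i))) := by
  rw [Nat.add_choose_eq, Nat.sum_antidiagonal_eq_sum_range_succ_mk]
  push_cast
  rw [sum_mul]
  refine sum_congr rfl fun i hi => ?_
  have hin : i ≤ n := Nat.lt_succ_iff.1 (mem_range.1 hi)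
  by_cases hik : i ≤ k
  · by_cases hil : n - i ≤ l
    · rw [mul_mul_mul_comm, ← pow_add, show k - i + (l - (n - i)) = k + l - n by omega,
        mul_assoc]
    · simp [Nat.choose_eq_zero_of_lt (show l < n - i by omega)]
  · simp [Nat.choose_eq_zero_of_lt (show k < i by omega)]

lemma hasSum_add_choose_mul_pow_div_pow {lam L : ℝ} (hlam0 : 0 ≤ lam) (hlam : lam < L) (n : ℕ) :
    HasSum (fun p : ℕ × ℕ => ((p.1 + p.2).choose n : ℝ) * lam ^ (p.1 + p.2 - n) / L ^ (p.1 + p.2))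
      ((n + 1) * L ^ 2 / (L - lam) ^ (n + 2)) := by
  have habs : |lam| < L := by rwa [abs_of_nonneg hlam0]
  have hL : 0 < L := hlam0.trans_lt hlam
  have hterm (i : ℕ) : HasSum (fun p : ℕ × ℕ =>
      ((p.1.choose i : ℝ) * lam ^ (p.1 - i) / L ^ p.1) *
        ((p.2.choose (n - i) : ℝ) * lam ^ (p.2 - (n - i)) / L ^ p.2))
      (L / (L - lam) ^ (i + 1) * (L / (L - lam) ^ (n - i + 1))) := by
    have hA := hasSum_choose_mul_pow_div_pow habs i
    have hB := hasSum_choose_mul_pow_div_pow habs (n - i)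
    exact hA.mul hB (hA.summable.mul_of_nonneg hB.summable (fun _ => by positivity)
      (fun _ => by positivity))
  convert hasSum_sum (s := range (n + 1)) fun i _ => hterm i using 1
  · funext p
    rw [pow_add, add_choose_mul_pow_eq_sum, sum_div]
    refine sum_congr rfl fun i _ => ?_
    field_simp
  · rw [sum_congr rfl fun i hi => by
      rw [div_mul_div_comm, ← pow_add, ← sq,
        show i + 1 + (n - i + 1) = n + 2 by have := mem_range.1 hi; omega],
      sum_const, card_range, nsmul_eq_mul]
    push_cast
    ring

lemma acoeff_mul_factorial_mul_factorial (lam : ℝ) (n k l : ℕ) :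
    acoeff lam n k l * (k ! * l !) = n ! * ((k + l).choose n * lam ^ (k + l - n)) := by
  unfold acoeff
  split_ifs with hn
  · rw [← Nat.choose_mul_factorial_mul_factorial hn]
    push_cast
    field_simp
  · simp [Nat.choose_eq_zero_of_lt (not_le.1 hn)]

lemma sup2_nonneg (f : ℝ → ℝ → ℝ) : 0 ≤ sup2 f :=
  Real.iSup_nonneg fun _ => Real.iSup_nonneg fun _ => abs_nonneg _

lemma acoeff_nonneg {lam : ℝ} (hlam : 0 ≤ lam) (n k l : ℕ) : 0 ≤ acoeff lam n k l := by
  unfold acoeff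
  split_ifs <;> positivity

theorem pnorm_le_of_analytic_bound_general (f : ℝ → ℝ → ℝ) (Λ C : ℝ)
    (hb : ∀ k l : ℕ,
      Λ ^ (k + l) / ((k.factorial : ℝ) * (l.factorial : ℝ)) * sup2 (D2 k l f) ≤ C)
    (lam : ℝ) (hlam0 : 0 < lam) (hlamΛ : lam < Λ) (n : ℕ) :
    pn2 lam n f ≤ C * Λ ^ 2 * ((n + 1).factorial : ℝ) / (Λ - lam) ^ (n + 2) := by
  have hΛ : 0 < Λ := hlam0.trans hlamΛ
  have hterm_le (p : ℕ × ℕ) : acoeff lam n p.1 p.2 * sup2 (D2 p.1 p.2 f) ≤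
      C * n ! * (((p.1 + p.2).choose n : ℝ) * lam ^ (p.1 + p.2 - n) / Λ ^ (p.1 + p.2)) := by
    obtain ⟨k, l⟩ := p
    have hsup : sup2 (D2 k l f) ≤ C * (k ! * l !) / Λ ^ (k + l) := by
      rw [le_div_iff₀ (by positivity)]
      have := hb k l
      rw [div_mul_eq_mul_div, div_le_iff₀ (by positivity)] at this
      linarith
    calc acoeff lam n k l * sup2 (D2 k l f)
        ≤ acoeff lam n k l * (C * (k ! * l !) / Λ ^ (k + l)) :=
          mul_le_mul_of_nonneg_left hsup (acoeff_nonneg hlam0.le n k l)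
      _ = C * (acoeff lam n k l * (k ! * l !)) / Λ ^ (k + l) := by ring
      _ = _ := by rw [acoeff_mul_factorial_mul_factorial]; ring
  have hsum := (hasSum_add_choose_mul_pow_div_pow hlam0.le hlamΛ n).mul_left (C * n !)
  have hsummable : Summable fun p : ℕ × ℕ => acoeff lam n p.1 p.2 * sup2 (D2 p.1 p.2 f) :=
    .of_nonneg_of_le (fun p => mul_nonneg (acoeff_nonneg hlam0.le n p.1 p.2) (sup2_nonneg _))
      hterm_le hsum.summable
  calc pn2 lam n f ≤ C * n ! * ((n + 1) * Λ ^ 2 / (Λ - lam) ^ (n + 2)) :=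
        hasSum_le hterm_le hsummable.hasSum hsum
    _ = _ := by push_cast [Nat.factorial_succ]; ring

/-- Quantitative bound: if `(Λ^{k+l}/(k! l!)) ‖∂ₓᵏ∂ᵥˡ f‖_∞ ≤ C` for all `k,l`, then for
`0 < λ < Λ` and every `n`, `|f|_{λ,n} ≤ C Λ² (n+1)! / (Λ-λ)^{n+2}`. -/
theorem pnorm_le_of_analytic_bound (f : ℝ → ℝ → ℝ) (Λ C : ℝ) (hΛ : 0 < Λ) (hC : 0 < C)
    (hf : ContDiff ℝ (⊤ : ℕ∞) (fun p : ℝ × ℝ => f p.1 p.2))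
    (hb : ∀ k l : ℕ,
      Λ ^ (k + l) / ((k.factorial : ℝ) * (l.factorial : ℝ)) * sup2 (D2 k l f) ≤ C)
    (lam : ℝ) (hlam0 : 0 < lam) (hlamΛ : lam < Λ) (n : ℕ) :
    pn2 lam n f ≤ C * Λ ^ 2 * ((n + 1).factorial : ℝ) / (Λ - lam) ^ (n + 2) :=
  pnorm_le_of_analytic_bound_general f Λ C hb lam hlam0 hlamΛ n
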